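/- arXiv:math/0610358 — 2 statements merged into one kernel-verified Lean document; each statement's English description precedes it below -/
import Mathlib

section
/- For every ε > 0 there exists a constant C_ε > 0, depending only on ε, with the following property: for every positive integer r, every r-even function f : ℕ+ → ℂ, every real K with |f(n)| ≤ K for all positive integers n, and every real x ≥ 1, one has |Σ_{n ≤ x} f(n) − M x| ≤ K · C_ε · r^{1+ε}, where M = (1/r) Σ_{e | r} f(e) φ(r/e). -/
/-! The function `k ↦ f (gcd k r)` is `r`-periodic and agrees with `f` on positive integers; over
one period it sums to `∑_{e ∣ r} f(e) φ(r/e) = r M`, because exactly `φ(r/e)` residues `k` have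
`gcd k r = e`. So the partial sum up to `x` consists of `⌊x⌋ / r` full periods, matching `M x` up to
at most one period's worth, plus fewer than `r` further terms: the error is at most `2 K r`. -/

open Finset Function

namespace Function.Periodic

section AddCommMonoid

variable {M : Type*} [AddCommMonoid M] {g : ℕ → M} {r : ℕ}

theorem sum_range_mul (hg : Periodic g r) (q : ℕ) :
    ∑ k ∈ range (q * r), g k = q • ∑ k ∈ range r, g k := by
  induction q with
  | zero => simp
  | succ q ih =>
    rw [add_mul, one_mul, sum_range_add, ih, succ_nsmul]
    congr 1
    refine sum_congr rfl fun k _ => ?_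
    rw [add_comm]
    exact_mod_cast hg.nat_mul q k

theorem sum_range_eq_div_nsmul_add (hg : Periodic g r) (N : ℕ) :
    ∑ k ∈ range N, g k = (N / r) • ∑ k ∈ range r, g k + ∑ k ∈ range (N % r), g k := by
  conv_lhs => rw [← Nat.div_add_mod' N r]
  rw [sum_range_add, hg.sum_range_mul]
  congr 1
  refine sum_congr rfl fun k _ => ?_
  rw [add_comm]
  exact_mod_cast hg.nat_mul (N / r) k

theorem sum_range_comp_add_one [IsRightCancelAdd M] (hg : Periodic g r) :
    ∑ k ∈ range r, g (k + 1) = ∑ k ∈ range r, g k := by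
  apply add_right_cancel (b := g 0)
  rw [← sum_range_succ', sum_range_succ, ← hg 0, zero_add]

end AddCommMonoid

variable {E : Type*} [SeminormedAddCommGroup E] [NormedSpace ℝ E] {g : ℕ → E} {r : ℕ}

theorem norm_sum_range_sub_smul_le (hg : Periodic g r) (hr : 0 < r) {K : ℝ}
    (hK : ∀ k, ‖g k‖ ≤ K) {x : ℝ} (hx : 0 ≤ x) :
    ‖∑ k ∈ range ⌊x⌋₊, g k - (x / r) • ∑ k ∈ range r, g k‖ ≤ 2 * K * r := by
  have norm_sum_le (n : ℕ) : ‖∑ k ∈ range n, g k‖ ≤ n * K := by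
    simpa using norm_sum_le_of_le (range n) fun k _ => hK k
  set N := ⌊x⌋₊
  set A := ∑ k ∈ range r, g k
  have hr' : (0 : ℝ) < r := by exact_mod_cast hr
  have hK0 : 0 ≤ K := (norm_nonneg _).trans (hK 0)
  set θ := x - (N / r : ℕ) * r
  have hθ : 0 ≤ θ ∧ θ ≤ r := by
    have hN : ((N / r : ℕ) : ℝ) * r + (N % r : ℕ) = N := by exact_mod_cast Nat.div_add_mod' N r
    have hmod : ((N % r : ℕ) : ℝ) + 1 ≤ r := by exact_mod_cast Nat.mod_lt N hr
    have := Nat.floor_le hx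
    have := Nat.lt_floor_add_one x
    constructor <;> simp only [θ] <;> nlinarith [(N % r : ℕ).cast_nonneg (α := ℝ)]
  have hdecomp : ∑ k ∈ range N, g k - (x / r) • A = ∑ k ∈ range (N % r), g k - (θ / r) • A := by
    rw [hg.sum_range_eq_div_nsmul_add, ← Nat.cast_smul_eq_nsmul ℝ]
    have : x / r = (N / r : ℕ) + θ / r := by field_simp; ring
    rw [this, add_smul]
    abel
  rw [hdecomp]
  calc ‖∑ k ∈ range (N % r), g k - (θ / r) • A‖
      ≤ ‖∑ k ∈ range (N % r), g k‖ + ‖(θ / r) • A‖ := norm_sub_le _ _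
    _ ≤ r * K + 1 * (r * K) := by
      gcongr
      · exact (norm_sum_le _).trans
          (mul_le_mul_of_nonneg_right (by exact_mod_cast (Nat.mod_lt N hr).le) hK0)
      · rw [norm_smul, Real.norm_of_nonneg (div_nonneg hθ.1 hr'.le)]
        exact mul_le_mul ((div_le_one hr').2 hθ.2) (norm_sum_le r)
          (norm_nonneg _) zero_le_one
    _ = 2 * K * r := by ring

end Function.Periodic

theorem Nat.sum_range_gcd_eq_sum_divisors {M : Type*} [AddCommMonoid M] (f : ℕ → M) (r : ℕ) :
    ∑ k ∈ range r, f (k.gcd r) = ∑ d ∈ r.divisors, Nat.totient (r / d) • f d := by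
  rcases r.eq_zero_or_pos with rfl | hr
  · simp
  rw [← sum_fiberwise_of_maps_to' (t := r.divisors)
    (fun k _ => Nat.mem_divisors.2 ⟨k.gcd_dvd_right r, hr.ne'⟩)]
  refine sum_congr rfl fun d hd => ?_
  rw [sum_const, Nat.totient_div_of_dvd (Nat.dvd_of_mem_divisors hd)]
  simp_rw [Nat.gcd_comm r]

/-- For every `ε > 0` there is a constant `C_ε > 0` such that for every `r ≥ 1`, every
`r`-even function `f`, every bound `K` on `|f|` and every real `x ≥ 1`,
`|∑_{n ≤ x} f(n) − M x| ≤ K C_ε r^{1+ε}`, where `M = (1/r) ∑_{e ∣ r} f(e) φ(r/e)`. -/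
theorem even_partial_sum_error (ε : ℝ) (hε : 0 < ε) :
    ∃ C : ℝ, 0 < C ∧ ∀ r : ℕ, 0 < r → ∀ f : ℕ → ℂ,
      (∀ n : ℕ, 0 < n → f n = f (Nat.gcd n r)) →
      ∀ K : ℝ, (∀ n : ℕ, 0 < n → ‖f n‖ ≤ K) →
      ∀ x : ℝ, 1 ≤ x →
        ‖(∑ n ∈ Finset.Icc 1 ⌊x⌋₊, f n) -
            ((1 / (r : ℂ)) * ∑ e ∈ r.divisors, f e * (Nat.totient (r / e) : ℂ)) * (x : ℂ)‖
          ≤ K * C * (r : ℝ) ^ (1 + ε) := by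
  refine ⟨2, two_pos, fun r hr f hf K hK x hx => ?_⟩
  have hK0 : 0 ≤ K := (norm_nonneg _).trans (hK 1 one_pos)
  have hperiodic : Periodic (fun k => f (k.gcd r)) r := fun k => by
    simp only [Nat.gcd_add_self_left]
  have hbound : ∀ k, ‖f ((k + 1).gcd r)‖ ≤ K := fun k =>
    hK _ (Nat.gcd_pos_of_pos_left r k.succ_pos)
  have hpartial : ∑ n ∈ Icc 1 ⌊x⌋₊, f n = ∑ k ∈ range ⌊x⌋₊, f ((k + 1).gcd r) := by
    rw [range_eq_Ico, sum_Ico_add' (fun n : ℕ => f (n.gcd r)), zero_add, Ico_add_one_right_eq_Icc]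
    exact sum_congr rfl fun n hn => hf n (mem_Icc.1 hn).1
  have hmean : ((1 / (r : ℂ)) * ∑ e ∈ r.divisors, f e * (Nat.totient (r / e) : ℂ)) * (x : ℂ)
      = (x / r) • ∑ k ∈ range r, f ((k + 1).gcd r) := by
    rw [show ∑ k ∈ range r, f ((k + 1).gcd r) = ∑ k ∈ range r, f (k.gcd r) from
      hperiodic.sum_range_comp_add_one, Nat.sum_range_gcd_eq_sum_divisors, Complex.real_smul]
    simp only [nsmul_eq_mul, mul_comm (Nat.cast _ : ℂ) (f _)]
    push_cast
    ring
  rw [hpartial, hmean]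
  calc _ ≤ 2 * K * r := (hperiodic.add_const 1).norm_sum_range_sub_smul_le hr hbound (by linarith)
    _ ≤ K * 2 * (r : ℝ) ^ (1 + ε) := by
      rw [mul_comm 2 K]
      gcongr
      exact Real.self_le_rpow_of_one_le (by exact_mod_cast hr) (by linarith)
end

section
/- For all positive integers r and s, the mean value M(c(·,r) c(·,s)) of the function n ↦ c(n,r) c(n,s) exists and equals δ_{r,s} φ(r), where δ_{r,s} = 1 if r = s and 0 otherwise. -/
/-!
Writing `c(n, r) = ∑ ζⁿ` over the primitive `r`-th roots of unity `ζ`, the product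
`c(n, r) c(n, s)` is a sum of `(ζη)ⁿ` over pairs of primitive roots. For `‖w‖ ≤ 1` the mean value
of `n ↦ wⁿ` is `1` if `w = 1` and `0` otherwise, since the geometric partial sums are bounded.
So the mean value counts the pairs with `ζη = 1`; then `η = ζ⁻¹` is a primitive `r`-th root,
which forces `r = s`, and there are `φ(r)` such pairs.
-/

open Finset Filter Topology

/-- The Ramanujan sum `c(n,r) = ∑_{1 ≤ k ≤ r, gcd(k,r)=1} exp(2πikn/r)`. -/
noncomputable def ramanujanSum (n r : ℕ) : ℂ :=
  ∑ k ∈ (Finset.Icc 1 r).filter (fun k => Nat.gcd k r = 1),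
    Complex.exp (2 * Real.pi * Complex.I * k * n / r)

def HasMeanValue (f : ℕ → ℂ) (m : ℂ) : Prop :=
  Tendsto (fun x : ℝ => (∑ n ∈ Icc 1 ⌊x⌋₊, f n) / (x : ℂ)) atTop (𝓝 m)

namespace HasMeanValue

theorem finset_sum {ι : Type*} (s : Finset ι) {f : ι → ℕ → ℂ} {m : ι → ℂ}
    (h : ∀ i ∈ s, HasMeanValue (f i) (m i)) :
    HasMeanValue (fun n => ∑ i ∈ s, f i n) (∑ i ∈ s, m i) := by
  unfold HasMeanValue at h ⊢
  convert tendsto_finsetSum s h using 2 with x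
  rw [Finset.sum_comm, Finset.sum_div]

theorem one : HasMeanValue (fun _ => 1) 1 := by
  unfold HasMeanValue
  have h := (Complex.continuous_ofReal.tendsto 1).comp (tendsto_nat_floor_div_atTop (R := ℝ))
  simpa [Function.comp_def] using h

theorem zero_of_norm_sum_le {f : ℕ → ℂ} (C : ℝ) (h : ∀ N, ‖∑ n ∈ Icc 1 N, f n‖ ≤ C) :
    HasMeanValue f 0 := by
  refine squeeze_zero_norm' (a := fun x : ℝ => C / x) ?_
    (tendsto_const_nhds.div_atTop tendsto_id)
  filter_upwards [eventually_gt_atTop (0 : ℝ)] with x hx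
  rw [norm_div, Complex.norm_real, Real.norm_of_nonneg hx.le]
  exact div_le_div_of_nonneg_right (h ⌊x⌋₊) hx.le

end HasMeanValue

theorem norm_sum_Icc_pow_le {z : ℂ} (hz : ‖z‖ ≤ 1) (hz1 : z ≠ 1) (N : ℕ) :
    ‖∑ n ∈ Icc 1 N, z ^ n‖ ≤ 2 / ‖z - 1‖ := by
  have hsum : ∑ n ∈ Icc 1 N, z ^ n = z * ((z ^ N - 1) / (z - 1)) := by
    rw [← geom_sum_eq hz1, mul_sum, ← Finset.Ico_add_one_right_eq_Icc, sum_Ico_eq_sum_range]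
    simp [pow_succ', add_comm]
  have hnum : ‖z ^ N - 1‖ ≤ 2 := by
    calc ‖z ^ N - 1‖ ≤ ‖z‖ ^ N + 1 := by simpa using norm_sub_le (z ^ N) 1
      _ ≤ 2 := by linarith [pow_le_one₀ (n := N) (norm_nonneg z) hz]
  rw [hsum, norm_mul, norm_div]
  calc ‖z‖ * (‖z ^ N - 1‖ / ‖z - 1‖) ≤ 1 * (2 / ‖z - 1‖) := by gcongr
    _ = 2 / ‖z - 1‖ := one_mul _

theorem hasMeanValue_pow {z : ℂ} (hz : ‖z‖ ≤ 1) :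
    HasMeanValue (z ^ ·) (if z = 1 then 1 else 0) := by
  split_ifs with hz1
  · simpa [hz1] using HasMeanValue.one
  · exact HasMeanValue.zero_of_norm_sum_le _ (norm_sum_Icc_pow_le hz hz1)


theorem card_filter_gcd_eq_one_Icc (r : ℕ) :
    #{k ∈ Icc 1 r | Nat.gcd k r = 1} = Nat.totient r := by
  rw [← Nat.filter_coprime_Ico_eq_totient r 1, add_comm, Ico_add_one_right_eq_Icc]
  simp only [Nat.coprime_comm, Nat.Coprime]

theorem IsPrimitiveRoot.injOn_pow_Icc {M : Type*} [CommMonoid M] {ζ : M} {r : ℕ}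
    (h : IsPrimitiveRoot ζ r) : Set.InjOn (ζ ^ ·) (Icc 1 r : Set ℕ) := by
  intro a ha b hb hab
  simp only [coe_Icc, Set.mem_Icc] at ha hb
  obtain ⟨a, rfl⟩ : ∃ a', a = a' + 1 := ⟨a - 1, by omega⟩
  obtain ⟨b, rfl⟩ : ∃ b', b = b' + 1 := ⟨b - 1, by omega⟩
  simp only [pow_succ] at hab
  have := h.pow_inj (by omega) (by omega) ((h.isUnit (by omega)).mul_right_cancel hab)
  omega

theorem IsPrimitiveRoot.image_pow_filter_gcd_eq_one_Icc {R : Type*} [CommRing R] [IsDomain R]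
    [DecidableEq R] {ζ : R} {r : ℕ} (h : IsPrimitiveRoot ζ r) :
    image (ζ ^ ·) {k ∈ Icc 1 r | Nat.gcd k r = 1} = primitiveRoots r R := by
  rcases r.eq_zero_or_pos with rfl | hr
  · simp
  refine eq_of_subset_of_card_le ?_ ?_
  · simp only [subset_iff, mem_image, mem_filter]
    rintro _ ⟨k, ⟨-, hk⟩, rfl⟩
    exact (mem_primitiveRoots hr).2 ((h.pow_iff_coprime hr k).2 hk)
  · rw [h.card_primitiveRoots,
      card_image_of_injOn (h.injOn_pow_Icc.mono (coe_subset.2 (filter_subset _ _))),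
      card_filter_gcd_eq_one_Icc]

theorem Complex.norm_eq_one_of_mem_primitiveRoots {ζ : ℂ} {r : ℕ}
    (h : ζ ∈ primitiveRoots r ℂ) : ‖ζ‖ = 1 := by
  rcases r.eq_zero_or_pos with rfl | hr
  · simp at h
  exact ((mem_primitiveRoots hr).1 h).norm'_eq_one hr.ne'

theorem ramanujanSum_eq_sum_primitiveRoots (n r : ℕ) :
    ramanujanSum n r = ∑ ζ ∈ primitiveRoots r ℂ, ζ ^ n := by
  rcases r.eq_zero_or_pos with rfl | hr
  · simp [ramanujanSum]
  have h := Complex.isPrimitiveRoot_exp r hr.ne'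
  rw [← h.image_pow_filter_gcd_eq_one_Icc,
    sum_image (h.injOn_pow_Icc.mono (coe_subset.2 (filter_subset _ _))), ramanujanSum]
  refine sum_congr rfl fun k _ => ?_
  rw [← pow_mul, ← Complex.exp_nat_mul]
  congr 1
  push_cast
  ring

theorem inv_mem_primitiveRoots {K : Type*} [Field K] {ζ : K} {r : ℕ}
    (h : ζ ∈ primitiveRoots r K) : ζ⁻¹ ∈ primitiveRoots r K := by
  rcases r.eq_zero_or_pos with rfl | hr
  · simp at h
  exact (mem_primitiveRoots hr).2 ((mem_primitiveRoots hr).1 h).inv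

theorem card_filter_mul_eq_one_primitiveRoots {K : Type*} [Field K] [DecidableEq K]
    (r s : ℕ) :
    #{p ∈ primitiveRoots r K ×ˢ primitiveRoots s K | p.1 * p.2 = 1} =
      if r = s then #(primitiveRoots r K) else 0 := by
  split_ifs with hrs
  · subst hrs
    rcases r.eq_zero_or_pos with rfl | hr
    · simp
    have hinv : {p ∈ primitiveRoots r K ×ˢ primitiveRoots r K | p.1 * p.2 = 1} =
        image (fun ζ => (ζ, ζ⁻¹)) (primitiveRoots r K) := by
      ext ⟨ζ, η⟩
      simp only [mem_filter, mem_product, mem_image, Prod.mk.injEq]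
      constructor
      · rintro ⟨⟨hζ, -⟩, hζη⟩
        exact ⟨ζ, hζ, rfl, (eq_inv_of_mul_eq_one_right hζη).symm⟩
      · rintro ⟨ζ, hζ, rfl, rfl⟩
        exact ⟨⟨hζ, inv_mem_primitiveRoots hζ⟩,
          mul_inv_cancel₀ (((mem_primitiveRoots hr).1 hζ).ne_zero hr.ne')⟩
    rw [hinv, card_image_of_injective _ fun ζ η h => congrArg Prod.fst h]
  · rw [card_eq_zero, filter_eq_empty_iff]
    rintro ⟨ζ, η⟩ hp hζη
    simp only [mem_product] at hp
    have hη : η = ζ⁻¹ := eq_inv_of_mul_eq_one_right hζη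
    exact hrs ((isPrimitiveRoot_of_mem_primitiveRoots hp.1).inv.unique
      (hη ▸ isPrimitiveRoot_of_mem_primitiveRoots hp.2))

theorem ramanujanSum_orthogonality_general (r s : ℕ) :
    Tendsto
      (fun x : ℝ =>
        (∑ n ∈ Finset.Icc 1 ⌊x⌋₊, ramanujanSum n r * ramanujanSum n s) / (x : ℂ))
      atTop
      (𝓝 (if r = s then (Nat.totient r : ℂ) else 0)) := by
  set P := primitiveRoots r ℂ ×ˢ primitiveRoots s ℂ
  have hprod (n : ℕ) :
      ramanujanSum n r * ramanujanSum n s = ∑ p ∈ P, (p.1 * p.2) ^ n := by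
    simp only [ramanujanSum_eq_sum_primitiveRoots, sum_mul_sum, sum_product, mul_pow, P]
  have hmean : HasMeanValue (fun n => ∑ p ∈ P, (p.1 * p.2) ^ n)
      (∑ p ∈ P, if p.1 * p.2 = 1 then 1 else 0) := by
    refine HasMeanValue.finset_sum P fun p hp => hasMeanValue_pow (le_of_eq ?_)
    rw [mem_product] at hp
    rw [norm_mul, Complex.norm_eq_one_of_mem_primitiveRoots hp.1,
      Complex.norm_eq_one_of_mem_primitiveRoots hp.2, one_mul]
  rw [sum_boole, card_filter_mul_eq_one_primitiveRoots, Complex.card_primitiveRoots,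
    Nat.cast_ite, Nat.cast_zero] at hmean
  simp only [hprod]
  exact hmean

/-- Orthogonality of Ramanujan sums: the mean value of `n ↦ c(n,r) c(n,s)` exists and
equals `δ_{r,s} φ(r)`. -/
theorem ramanujanSum_orthogonality (r s : ℕ) (hr : 0 < r) (hs : 0 < s) :
    Tendsto
      (fun x : ℝ =>
        (∑ n ∈ Finset.Icc 1 ⌊x⌋₊, ramanujanSum n r * ramanujanSum n s) / (x : ℂ))
      atTop
      (𝓝 (if r = s then (Nat.totient r : ℂ) else 0)) :=
  ramanujanSum_orthogonality_general r s
end
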